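/- arXiv:2605.30648 — 7 statements merged into one kernel-verified Lean document; each statement's English description precedes it below -/
import Mathlib

section
/- Let g : ℝ → ℝ be twice differentiable with g(t) ≥ 0 for all t, and suppose there exist constants H₀ ≥ 0 and H₁ > 0 such that g''(t) ≤ H₀ + H₁·g(t) for all t. Then g'(0) ≤ √(2·H₀·g(0) + H₁·g(0)²). -/
/-!
Suppose `g'(0) > √(2 H₀ g(0) + H₁ g(0)²)`. The energy `E = g'² - 2 H₀ g - H₁ g²`, a first integral of
`φ'' = H₀ + H₁ φ`, satisfies `E' = 2 g' (g'' - H₀ - H₁ g)`, so it does not decrease backwards in time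
while `g' ≥ 0`, and `E(0) > 0`. At the last zero of `g'` before `0` we would have `E ≤ 0`, so `g'` has
no zero on `(-∞, 0]`; hence `g'² ≥ E ≥ E(0)` there, and `g` decreases at least linearly towards `-∞`,
contradicting `g ≥ 0`.
-/

open Set

noncomputable def energy (g : ℝ → ℝ) (H0 H1 t : ℝ) : ℝ :=
  deriv g t ^ 2 - 2 * H0 * g t - H1 * g t ^ 2

theorem hasDerivAt_energy {g : ℝ → ℝ} {H0 H1 t : ℝ} (hg : DifferentiableAt ℝ g t)
    (hg' : DifferentiableAt ℝ (deriv g) t) :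
    HasDerivAt (energy g H0 H1) (2 * deriv g t * (deriv (deriv g) t - H0 - H1 * g t)) t := by
  have h := ((hg'.hasDerivAt.pow 2).sub (hg.hasDerivAt.const_mul (2 * H0))).sub
    ((hg.hasDerivAt.pow 2).const_mul H1)
  exact h.congr_deriv (by push_cast; ring)

theorem energy_le_sq_deriv {g : ℝ → ℝ} {H0 H1 t : ℝ} (hH0 : 0 ≤ H0) (hH1 : 0 ≤ H1)
    (hgt : 0 ≤ g t) : energy g H0 H1 t ≤ deriv g t ^ 2 := by
  unfold energy
  nlinarith [mul_nonneg hH0 hgt, mul_nonneg hH1 (sq_nonneg (g t))]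

theorem energy_antitoneOn {g : ℝ → ℝ} {H0 H1 a b : ℝ} (hg1 : Differentiable ℝ g)
    (hg2 : Differentiable ℝ (deriv g)) (hode : ∀ t, deriv (deriv g) t ≤ H0 + H1 * g t)
    (hmono : ∀ u ∈ Icc a b, 0 ≤ deriv g u) : AntitoneOn (energy g H0 H1) (Icc a b) := by
  have hE : ∀ t, HasDerivAt (energy g H0 H1)
      (2 * deriv g t * (deriv (deriv g) t - H0 - H1 * g t)) t :=
    fun t ↦ hasDerivAt_energy (hg1 t) (hg2 t)
  have hdiff : Differentiable ℝ (energy g H0 H1) := fun t ↦ (hE t).differentiableAt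
  refine antitoneOn_of_deriv_nonpos (convex_Icc a b) hdiff.continuous.continuousOn
    hdiff.differentiableOn fun t ht ↦ ?_
  rw [interior_Icc] at ht
  rw [(hE t).deriv]
  have := hmono t (Ioo_subset_Icc_self ht)
  nlinarith [hode t]

theorem exists_last_zero {f : ℝ → ℝ} {a b : ℝ} (hab : a ≤ b) (hf : ContinuousOn f (Icc a b))
    (ha : f a ≤ 0) (hb : 0 < f b) : ∃ c ∈ Icc a b, f c = 0 ∧ ∀ u ∈ Ioc c b, 0 < f u := by
  have hzero : ∀ u ∈ Icc a b, f u ≤ 0 → ∃ z ∈ Icc u b, f z = 0 := fun u hu hfu ↦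
    intermediate_value_Icc hu.2 (hf.mono (Icc_subset_Icc_left hu.1)) ⟨hfu, hb.le⟩
  have hZ : IsCompact (Icc a b ∩ f ⁻¹' {0}) := isCompact_Icc.of_isClosed_subset
    (hf.preimage_isClosed_of_isClosed isClosed_Icc isClosed_singleton) inter_subset_left
  obtain ⟨z, hz, hfz⟩ := hzero a (left_mem_Icc.2 hab) ha
  obtain ⟨c, ⟨hc, hfc⟩, hgreatest⟩ := hZ.exists_isGreatest ⟨z, hz, hfz⟩
  refine ⟨c, hc, hfc, fun u hu ↦ ?_⟩
  by_contra! hfu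
  have hu' : u ∈ Icc a b := ⟨hc.1.trans hu.1.le, hu.2⟩
  obtain ⟨w, hw, hfw⟩ := hzero u hu' hfu
  have : w ≤ c := hgreatest ⟨⟨hu'.1.trans hw.1, hw.2⟩, hfw⟩
  linarith [hu.1, hw.1]

theorem deriv_pos_of_energy_pos {g : ℝ → ℝ} {H0 H1 b : ℝ} (hg1 : Differentiable ℝ g)
    (hg2 : Differentiable ℝ (deriv g)) (hgnn : ∀ t, 0 ≤ g t) (hH0 : 0 ≤ H0) (hH1 : 0 ≤ H1)
    (hode : ∀ t, deriv (deriv g) t ≤ H0 + H1 * g t) (hE : 0 < energy g H0 H1 b)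
    (hb : 0 < deriv g b) : ∀ t ≤ b, 0 < deriv g t := by
  intro t ht
  by_contra! hneg
  obtain ⟨c, hc, hc0, hpos⟩ := exists_last_zero ht hg2.continuous.continuousOn hneg hb
  have hnonneg : ∀ u ∈ Icc c b, 0 ≤ deriv g u := by
    rintro u ⟨hcu, hub⟩
    rcases hcu.eq_or_lt with rfl | hlt
    · exact hc0.ge
    · exact (hpos u ⟨hlt, hub⟩).le
  have hEc : energy g H0 H1 b ≤ energy g H0 H1 c := energy_antitoneOn hg1 hg2 hode hnonneg
    (left_mem_Icc.2 hc.2) (right_mem_Icc.2 hc.2) hc.2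
  have := energy_le_sq_deriv (g := g) (t := c) hH0 hH1 (hgnn c)
  rw [hc0] at this
  linarith

theorem exists_neg_of_le_deriv {g : ℝ → ℝ} {s b : ℝ} (hg : Differentiable ℝ g) (hs : 0 < s)
    (hle : ∀ t ≤ b, s ≤ deriv g t) : ∃ t, g t < 0 := by
  set t := b - (|g b| + 1) / s
  have ht : t ≤ b := sub_le_self _ (by positivity)
  have hmvt := (convex_Iic b).mul_sub_le_image_sub_of_le_deriv hg.continuous.continuousOn
    hg.differentiableOn (fun x hx ↦ hle x (by rw [interior_Iic] at hx; exact hx.le))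
    t ht b (mem_Iic.2 le_rfl) ht
  have hst : s * (b - t) = |g b| + 1 := by simp only [t]; field_simp; ring
  exact ⟨t, by linarith [le_abs_self (g b)]⟩

/-- If `g : ℝ → ℝ` is twice differentiable, nonnegative, and its second derivative
satisfies `g'' t ≤ H₀ + H₁ * g t` with `H₀ ≥ 0`, `H₁ > 0`, then
`g' 0 ≤ √(2 H₀ g 0 + H₁ (g 0)²)`. -/
theorem stmt0 (g : ℝ → ℝ) (hg1 : Differentiable ℝ g) (hg2 : Differentiable ℝ (deriv g))
    (hgnn : ∀ t, 0 ≤ g t) (H0 H1 : ℝ) (hH0 : 0 ≤ H0) (hH1 : 0 < H1)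
    (hode : ∀ t, deriv (deriv g) t ≤ H0 + H1 * g t) :
    deriv g 0 ≤ Real.sqrt (2 * H0 * g 0 + H1 * (g 0) ^ 2) := by
  by_contra! hlt
  have hg'0 : 0 < deriv g 0 := (Real.sqrt_nonneg _).trans_lt hlt
  have hE0 : 0 < energy g H0 H1 0 := by
    have := (Real.sqrt_lt' hg'0).1 hlt
    unfold energy
    linarith
  have hpos := deriv_pos_of_energy_pos hg1 hg2 hgnn hH0 hH1.le hode hE0 hg'0
  have hlow : ∀ t ≤ 0, √(energy g H0 H1 0) ≤ deriv g t := fun t ht ↦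
    Real.sqrt_le_iff.2 ⟨(hpos t ht).le,
      (energy_antitoneOn hg1 hg2 hode (fun u hu ↦ (hpos u hu.2).le) (left_mem_Icc.2 ht)
        (right_mem_Icc.2 ht) ht).trans (energy_le_sq_deriv hH0 hH1.le (hgnn t))⟩
  obtain ⟨t, ht⟩ := exists_neg_of_le_deriv hg1 (Real.sqrt_pos.2 hE0) hlow
  exact (hgnn t).not_gt ht
end

section
/- Let f : ℝᴰ → ℝ be twice differentiable and nonnegative, with ‖∇²f(θ)‖_{p→q} ≤ H₁·f(θ) for all θ (H₁ > 0, 1/p + 1/q = 1). Then for all x, y: f(y) ≤ f(x)·exp(√H₁·‖y − x‖_p). -/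
open scoped BigOperators

noncomputable def lpNorm (p : ENNReal) {ι : Type*} [Fintype ι] (x : ι → ℝ) : ℝ :=
  ‖(WithLp.equiv p (ι → ℝ)).symm x‖

noncomputable def opNorm (p q : ENNReal) {ι κ : Type*} [Fintype ι] [Fintype κ]
    (A : Matrix ι κ ℝ) : ℝ :=
  sSup {c | ∃ x : κ → ℝ, lpNorm p x ≤ 1 ∧ c = lpNorm q (A.mulVec x)}

noncomputable def dotCLM {n : ℕ} (v : Fin n → ℝ) : (Fin n → ℝ) →L[ℝ] ℝ :=
  LinearMap.toContinuousLinearMap (∑ i, v i • (LinearMap.proj i : (Fin n → ℝ) →ₗ[ℝ] ℝ))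

noncomputable def mulVecCLM {m n : ℕ} (M : Matrix (Fin m) (Fin n) ℝ) :
    (Fin n → ℝ) →L[ℝ] (Fin m → ℝ) :=
  LinearMap.toContinuousLinearMap M.mulVecLin


/-! Along the segment, `h t = f (x + t • (y - x))` is nonnegative and, by Hölder's inequality and
the Hessian bound, satisfies `h'' ≤ c² h` with `c = √H₁ ‖y - x‖_p`. Such a function obeys
`h' ≤ c h` on all of `ℝ`: otherwise `e^{ct} (h' - c h)`, which is antitone, stays above a positive
constant to the left of the bad point, so `h` increases at a uniform rate on a left half-line and
must become negative there. Grönwall's inequality then gives `h 1 ≤ h 0 · e^c`. -/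

open Real Matrix WithLp

lemma dotCLM_apply {n : ℕ} (v w : Fin n → ℝ) : dotCLM v w = v ⬝ᵥ w := by
  simp [dotCLM, LinearMap.coe_toContinuousLinearMap', dotProduct]

lemma mulVecCLM_apply {m n : ℕ} (M : Matrix (Fin m) (Fin n) ℝ) (x : Fin n → ℝ) :
    mulVecCLM M x = M *ᵥ x := rfl

section Holder

variable {ι : Type*} [Fintype ι]

lemma lpNorm_eq_sum {p : ENNReal} (hp : 0 < p.toReal) (x : ι → ℝ) :
    lpNorm p x = (∑ i, |x i| ^ p.toReal) ^ (1 / p.toReal) := by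
  simp [lpNorm, PiLp.norm_eq_sum hp]

lemma dotProduct_le_lpNorm_top_mul_lpNorm_one (u w : ι → ℝ) :
    u ⬝ᵥ w ≤ lpNorm ⊤ u * lpNorm 1 w := by
  have hu (i : ι) : |u i| ≤ lpNorm ⊤ u := PiLp.norm_apply_le (toLp ⊤ u) i
  rw [lpNorm, lpNorm, PiLp.norm_eq_of_L1, Finset.mul_sum]
  refine Finset.sum_le_sum fun i _ => ?_
  calc u i * w i ≤ |u i| * |w i| := abs_mul (u i) (w i) ▸ le_abs_self _
    _ ≤ lpNorm ⊤ u * ‖(toLp 1 w) i‖ := mul_le_mul_of_nonneg_right (hu i) (abs_nonneg _)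

lemma dotProduct_le_lpNorm_mul_lpNorm {p q : ENNReal} [p.HolderConjugate q] (u w : ι → ℝ) :
    u ⬝ᵥ w ≤ lpNorm p u * lpNorm q w := by
  rcases eq_or_ne p ⊤ with rfl | hp
  · rw [(ENNReal.HolderConjugate.eq_top_iff_eq_one ⊤ q).mp rfl]
    exact dotProduct_le_lpNorm_top_mul_lpNorm_one u w
  rcases eq_or_ne q ⊤ with rfl | hq
  · rw [(ENNReal.HolderConjugate.eq_top_iff_eq_one ⊤ p).mp rfl, dotProduct_comm, mul_comm]
    exact dotProduct_le_lpNorm_top_mul_lpNorm_one w u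
  have hpq := ENNReal.HolderConjugate.toReal_of_ne_top hp hq
  rw [lpNorm_eq_sum hpq.pos, lpNorm_eq_sum hpq.symm.pos]
  exact inner_le_Lp_mul_Lq Finset.univ u w hpq

end Holder

section OperatorNorm

variable {ι κ : Type*} [Fintype ι] [Fintype κ] {p q : ENNReal} [Fact (1 ≤ p)] [Fact (1 ≤ q)]

lemma opNorm_eq_norm_toLpLin [DecidableEq κ] (A : Matrix ι κ ℝ) :
    opNorm p q A = ‖LinearMap.toContinuousLinearMap (toLpLin p q A)‖ := by
  rw [← ContinuousLinearMap.sSup_unitClosedBall_eq_norm, opNorm]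
  congr 1
  ext c
  constructor
  · rintro ⟨x, hx, rfl⟩
    exact ⟨toLp p x, by simpa [lpNorm] using hx, by simp [lpNorm]⟩
  · rintro ⟨v, hv, rfl⟩
    exact ⟨ofLp v, by simpa [lpNorm] using hv, by simp [lpNorm, toLpLin_apply]⟩

lemma lpNorm_mulVec_le_opNorm_mul (A : Matrix ι κ ℝ) (x : κ → ℝ) :
    lpNorm q (A *ᵥ x) ≤ opNorm p q A * lpNorm p x := by
  classical
  rw [opNorm_eq_norm_toLpLin]
  exact (LinearMap.toContinuousLinearMap (toLpLin p q A)).le_opNorm (toLp p x)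

end OperatorNorm

lemma dotProduct_mulVec_le_opNorm_mul_sq {ι : Type*} [Fintype ι] {p q : ENNReal}
    [p.HolderConjugate q] (A : Matrix ι ι ℝ) (u : ι → ℝ) :
    u ⬝ᵥ (A *ᵥ u) ≤ opNorm p q A * lpNorm p u ^ 2 := by
  have : Fact (1 ≤ p) := ⟨ENNReal.HolderConjugate.one_le p q⟩
  have : Fact (1 ≤ q) := ⟨ENNReal.HolderConjugate.one_le q p⟩
  calc u ⬝ᵥ (A *ᵥ u) ≤ lpNorm p u * lpNorm q (A *ᵥ u) := dotProduct_le_lpNorm_mul_lpNorm u _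
    _ ≤ lpNorm p u * (opNorm p q A * lpNorm p u) :=
        mul_le_mul_of_nonneg_left (lpNorm_mulVec_le_opNorm_mul A u) (norm_nonneg _)
    _ = opNorm p q A * lpNorm p u ^ 2 := by ring

section OneVariable

variable {h h' h'' : ℝ → ℝ} {c : ℝ}

lemma nonpos_of_le_deriv_Iic {K s : ℝ} (hnn : ∀ t, 0 ≤ h t) (hd : ∀ t, HasDerivAt h (h' t) t)
    (hK : ∀ t ≤ s, K ≤ h' t) : K ≤ 0 := by
  by_contra! hKpos
  have hslope := (convex_Iic s).mul_sub_le_image_sub_of_le_deriv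
    (fun t _ => (hd t).continuousAt.continuousWithinAt)
    (fun t _ => (hd t).differentiableAt.differentiableWithinAt)
    (fun t ht => (hd t).deriv ▸ hK t (interior_Iic.subset ht).le)
  have ht : s - (h s + 1) / K ≤ s := sub_le_self _ (by have := hnn s; positivity)
  have := hslope _ ht s (Set.mem_Iic.mpr le_rfl) ht
  rw [sub_sub_cancel, mul_div_cancel₀ _ hKpos.ne'] at this
  linarith [hnn (s - (h s + 1) / K)]

lemma deriv_le_mul_self_of_deriv_deriv_le (hc : 0 ≤ c) (hnn : ∀ t, 0 ≤ h t)
    (hd : ∀ t, HasDerivAt h (h' t) t) (hd' : ∀ t, HasDerivAt h' (h'' t) t)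
    (hle : ∀ t, h'' t ≤ c ^ 2 * h t) (t : ℝ) : h' t ≤ c * h t := by
  by_contra! ht
  have hanti : Antitone fun t => exp (c * t) * (h' t - c * h t) := by
    refine antitone_of_hasDerivAt_nonpos (f' := fun t => exp (c * t) * (h'' t - c ^ 2 * h t))
      (fun s => ?_) fun s => ?_
    · have := ((hasDerivAt_id s).const_mul c).exp.fun_mul ((hd' s).fun_sub ((hd s).const_mul c))
      exact this.congr_deriv (by simp only [id, mul_one]; ring)
    · exact mul_nonpos_of_nonneg_of_nonpos (exp_pos _).le (by linarith [hle s])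
  set K := exp (c * t) * (h' t - c * h t)
  have hK : 0 < K := mul_pos (exp_pos _) (by linarith)
  refine hK.not_ge (nonpos_of_le_deriv_Iic hnn hd (s := min t 0) fun s hs => ?_)
  have hKs : K ≤ exp (c * s) * (h' s - c * h s) := hanti (hs.trans (min_le_left _ _))
  have hexp : exp (c * s) ≤ 1 :=
    exp_le_one_iff.mpr (mul_nonpos_of_nonneg_of_nonpos hc (hs.trans (min_le_right _ _)))
  nlinarith [exp_pos (c * s), mul_nonneg hc (hnn s)]

lemma le_mul_exp_of_deriv_le_mul_self (hd : ∀ t, HasDerivAt h (h' t) t)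
    (hle : ∀ t, h' t ≤ c * h t) {a b : ℝ} (hab : a ≤ b) : h b ≤ h a * exp (c * (b - a)) := by
  rw [← gronwallBound_ε0]
  refine le_gronwallBound_of_liminf_deriv_right_le (f' := h')
    (fun t _ => (hd t).continuousAt.continuousWithinAt)
    (fun t _ r hr => (hd t).hasDerivWithinAt.liminf_right_slope_le hr) le_rfl
    (fun t _ => by simpa using hle t) b ⟨hab, le_rfl⟩

end OneVariable

lemma hasDerivAt_add_smul {E : Type*} [NormedAddCommGroup E] [NormedSpace ℝ E] (x u : E) (t : ℝ) :
    HasDerivAt (fun t : ℝ => x + t • u) u t := by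
  simpa using ((hasDerivAt_id t).smul_const u).const_add x

section Line

variable {n : ℕ} (x u : Fin n → ℝ) (t : ℝ)

lemma hasDerivAt_comp_add_smul {f : (Fin n → ℝ) → ℝ} {v : Fin n → ℝ}
    (hf : HasFDerivAt f (dotCLM v) (x + t • u)) :
    HasDerivAt (fun t => f (x + t • u)) (u ⬝ᵥ v) t := by
  have := hf.comp_hasDerivAt t (hasDerivAt_add_smul x u t)
  rwa [dotCLM_apply, dotProduct_comm] at this

lemma hasDerivAt_dotProduct_comp_add_smul {g : (Fin n → ℝ) → (Fin n → ℝ)}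
    {M : Matrix (Fin n) (Fin n) ℝ} (hg : HasFDerivAt g (mulVecCLM M) (x + t • u)) :
    HasDerivAt (fun t => u ⬝ᵥ g (x + t • u)) (u ⬝ᵥ (M *ᵥ u)) t := by
  have := (dotCLM u).hasFDerivAt.comp_hasDerivAt t
    (hg.comp_hasDerivAt t (hasDerivAt_add_smul x u t))
  simpa only [Function.comp_def, dotCLM_apply, mulVecCLM_apply] using this

end Line

theorem stmt2_general {D : ℕ} (p q : ENNReal) (hp : 1 ≤ p) (hpq : 1/p + 1/q = 1)
    (f : (Fin D → ℝ) → ℝ) (g : (Fin D → ℝ) → (Fin D → ℝ))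
    (Hess : (Fin D → ℝ) → Matrix (Fin D) (Fin D) ℝ)
    (hfnn : ∀ θ, 0 ≤ f θ)
    (hgrad : ∀ θ, HasFDerivAt f (dotCLM (g θ)) θ)
    (hhess : ∀ θ, HasFDerivAt g (mulVecCLM (Hess θ)) θ)
    (H1 : ℝ)
    (hnus : ∀ θ, opNorm p q (Hess θ) ≤ H1 * f θ) :
    ∀ x y, f y ≤ f x * Real.exp (Real.sqrt H1 * lpNorm p (y - x)) := by
  intro x y
  have : p.HolderConjugate q := ENNReal.holderConjugate_iff.mpr (by simpa only [one_div] using hpq)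
  have : Fact (1 ≤ p) := ⟨hp⟩
  set u := y - x
  set c := √H1 * lpNorm p u
  have hc : 0 ≤ c := mul_nonneg (sqrt_nonneg _) (norm_nonneg _)
  have hcurv (t : ℝ) : u ⬝ᵥ (Hess (x + t • u) *ᵥ u) ≤ c ^ 2 * f (x + t • u) := calc
    _ ≤ opNorm p q (Hess (x + t • u)) * lpNorm p u ^ 2 := dotProduct_mulVec_le_opNorm_mul_sq _ u
    _ ≤ H1 * f (x + t • u) * lpNorm p u ^ 2 := by gcongr; exact hnus _
    _ ≤ c ^ 2 * f (x + t • u) := by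
      rw [mul_pow, sq_sqrt']
      nlinarith [le_max_left H1 0, mul_nonneg (sq_nonneg (lpNorm p u)) (hfnn (x + t • u))]
  have hd t := hasDerivAt_comp_add_smul x u t (hgrad _)
  have hd' t := hasDerivAt_dotProduct_comp_add_smul x u t (hhess _)
  have hslope := deriv_le_mul_self_of_deriv_deriv_le hc (fun t => hfnn _) hd hd' hcurv
  simpa [u] using le_mul_exp_of_deriv_le_mul_self hd hslope zero_le_one

theorem stmt2 {D : ℕ} (p q : ENNReal) (hp : 1 ≤ p) (hq : 1 ≤ q) (hpq : 1/p + 1/q = 1)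
    (f : (Fin D → ℝ) → ℝ) (g : (Fin D → ℝ) → (Fin D → ℝ))
    (Hess : (Fin D → ℝ) → Matrix (Fin D) (Fin D) ℝ)
    (hfnn : ∀ θ, 0 ≤ f θ)
    (hgrad : ∀ θ, HasFDerivAt f (dotCLM (g θ)) θ)
    (hhess : ∀ θ, HasFDerivAt g (mulVecCLM (Hess θ)) θ)
    (H1 : ℝ) (hH1 : 0 < H1)
    (hnus : ∀ θ, opNorm p q (Hess θ) ≤ H1 * f θ) :
    ∀ x y, f y ≤ f x * Real.exp (Real.sqrt H1 * lpNorm p (y - x)) :=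
  stmt2_general p q hp hpq f g Hess hfnn hgrad hhess H1 hnus
end

section
/- Let f : ℝᴰ → ℝ be twice differentiable and nonnegative, with ‖∇²f(θ)‖₂ ≤ H₁·f(θ) for all θ (Euclidean case H₀ = 0, H₁ > 0). Then the map θ ↦ ∇f(θ)/f(θ) is 2H₁-Lipschitz: for all x, y, ‖∇f(y)/f(y) − ∇f(x)/f(x)‖₂ ≤ 2·H₁·‖y − x‖₂. -/
open scoped BigOperators

/-! Along a line, `u t = f (x + t • v)` is positive with `u'' ≤ H ‖v‖² u`. A positive function
on `ℝ` with `u'' ≤ c² u` has `u' ≥ -c u`: otherwise `w = u' + c u` is negative somewhere,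
`w' ≤ c w` keeps it below that negative value from then on, and `u' ≤ w` drives `u` below zero
in finite time. Applied to `±v` this gives `‖f'‖ ≤ √H f`. The derivative of `f' / f` (the
gradient of `log f`) is `f'' / f - f' ⊗ f' / f²`, of norm at most `H + H`, and the mean value
inequality concludes. -/

open Real

theorem neg_mul_le_deriv_of_deriv2_le_sq_mul {u u' u'' : ℝ → ℝ} {c : ℝ} (hc : 0 ≤ c)
    (hu : ∀ t, HasDerivAt u (u' t) t) (hu' : ∀ t, HasDerivAt u' (u'' t) t)
    (hpos : ∀ t, 0 < u t) (hb : ∀ t, u'' t ≤ c ^ 2 * u t) : -(c * u 0) ≤ u' 0 := by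
  by_contra! hneg
  set v₀ := u' 0 + c * u 0
  have hv₀_neg : v₀ < 0 := by linarith
  have hgronwall : Antitone fun t => exp (-(c * t)) * (u' t + c * u t) := by
    have hd : ∀ t, HasDerivAt (fun t => exp (-(c * t)) * (u' t + c * u t))
        (exp (-(c * t)) * (u'' t - c ^ 2 * u t)) t := fun t => by
      have he : HasDerivAt (fun t => exp (-(c * t))) (-c * exp (-(c * t))) t := by
        simpa [mul_comm] using ((hasDerivAt_id t).const_mul c).neg.exp
      exact (he.mul ((hu' t).add ((hu t).const_mul c))).congr_deriv
        (by simp only [Pi.add_apply]; ring)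
    refine antitone_of_deriv_nonpos (fun t => (hd t).differentiableAt) fun t => ?_
    rw [(hd t).deriv]
    exact mul_nonpos_of_nonneg_of_nonpos (exp_pos _).le (by linarith [hb t])
  have hderiv_le : ∀ t, 0 ≤ t → u' t ≤ v₀ := fun t ht => by
    have h₁ : exp (-(c * t)) * (u' t + c * u t) ≤ v₀ := by simpa using hgronwall ht
    have h₂ : 1 ≤ exp (c * t) := one_le_exp (mul_nonneg hc ht)
    have h₃ : u' t + c * u t ≤ exp (c * t) * v₀ := by
      have := mul_le_mul_of_nonneg_left h₁ (exp_pos (c * t)).le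
      rwa [← mul_assoc, ← exp_add, add_neg_cancel, exp_zero, one_mul] at this
    nlinarith [hpos t, mul_nonneg hc (hpos t).le]
  have hroot_nonneg : u 0 / -v₀ ∈ Set.Ici 0 := div_nonneg (hpos 0).le (by linarith)
  have hlin := (convex_Ici (0 : ℝ)).image_sub_le_mul_sub_of_deriv_le
    (fun t _ => (hu t).continuousAt.continuousWithinAt)
    (fun t _ => (hu t).differentiableAt.differentiableWithinAt)
    (fun t ht => by rw [(hu t).deriv]; exact hderiv_le t (interior_subset ht))
    0 Set.self_mem_Ici (u 0 / -v₀) hroot_nonneg hroot_nonneg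
  have hroot : v₀ * (u 0 / -v₀ - 0) = -u 0 := by
    rw [sub_zero, div_neg, mul_neg, mul_div_cancel₀ _ hv₀_neg.ne]
  linarith [hpos (u 0 / -v₀)]

section LogGradient

open ContinuousLinearMap

variable {E : Type*} [NormedAddCommGroup E] [NormedSpace ℝ E] {f : E → ℝ} {f' : E → E →L[ℝ] ℝ}
  {f'' : E → E →L[ℝ] E →L[ℝ] ℝ} {H : ℝ}

theorem neg_sqrt_mul_le_fderiv_apply (hpos : ∀ x, 0 < f x) (hf : ∀ x, HasFDerivAt f (f' x) x)
    (hf' : ∀ x, HasFDerivAt f' (f'' x) x) (hb : ∀ x, ‖f'' x‖ ≤ H * f x) (x v : E) :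
    -(√H * ‖v‖ * f x) ≤ f' x v := by
  have hH : 0 ≤ H := nonneg_of_mul_nonneg_left ((norm_nonneg (f'' x)).trans (hb x)) (hpos x)
  have hline : ∀ t : ℝ, HasDerivAt (fun t : ℝ => x + t • v) v t := fun t => by
    simpa using ((hasDerivAt_id t).smul_const v).const_add x
  have key := neg_mul_le_deriv_of_deriv2_le_sq_mul (u := fun t => f (x + t • v))
    (u' := fun t => f' (x + t • v) v) (u'' := fun t => f'' (x + t • v) v v)
    (by positivity) (fun t => (hf _).comp_hasDerivAt t (hline t))
    (fun t => by
      simpa using ((hf' _).comp_hasDerivAt t (hline t)).clm_apply (hasDerivAt_const t v))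
    (fun t => hpos _) fun t => calc
      f'' (x + t • v) v v ≤ ‖f'' (x + t • v)‖ * ‖v‖ * ‖v‖ :=
        (le_abs_self _).trans ((f'' _).le_opNorm₂ v v)
      _ ≤ H * f (x + t • v) * ‖v‖ * ‖v‖ := by gcongr; exact hb _
      _ = (√H * ‖v‖) ^ 2 * f (x + t • v) := by rw [mul_pow, sq_sqrt hH]; ring
  simpa [mul_assoc] using key

theorem norm_fderiv_le_sqrt_mul (hpos : ∀ x, 0 < f x) (hf : ∀ x, HasFDerivAt f (f' x) x)
    (hf' : ∀ x, HasFDerivAt f' (f'' x) x) (hb : ∀ x, ‖f'' x‖ ≤ H * f x) (x : E) :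
    ‖f' x‖ ≤ √H * f x := by
  refine (f' x).opNorm_le_bound (by have := hpos x; positivity) fun v => abs_le.2 ⟨?_, ?_⟩
  · simpa [mul_right_comm] using neg_sqrt_mul_le_fderiv_apply hpos hf hf' hb x v
  · simpa [mul_right_comm] using neg_sqrt_mul_le_fderiv_apply hpos hf hf' hb x (-v)

theorem hasFDerivAt_inv_smul_fderiv {x : E} (hx : f x ≠ 0) (hf : HasFDerivAt f (f' x) x)
    (hf' : HasFDerivAt f' (f'' x) x) :
    HasFDerivAt (fun y => (f y)⁻¹ • f' y)
      ((f x)⁻¹ • f'' x + (-(f x ^ 2)⁻¹ • f' x).smulRight (f' x)) x :=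
  ((hasDerivAt_inv hx).comp_hasFDerivAt x hf).smul hf'

theorem norm_inv_smul_fderiv_sub_le (hpos : ∀ x, 0 < f x) (hf : ∀ x, HasFDerivAt f (f' x) x)
    (hf' : ∀ x, HasFDerivAt f' (f'' x) x) (hb : ∀ x, ‖f'' x‖ ≤ H * f x) (x y : E) :
    ‖(f y)⁻¹ • f' y - (f x)⁻¹ • f' x‖ ≤ 2 * H * ‖y - x‖ := by
  refine convex_univ.norm_image_sub_le_of_norm_hasFDerivWithin_le
    (fun z _ => (hasFDerivAt_inv_smul_fderiv (hpos z).ne' (hf z) (hf' z)).hasFDerivWithinAt)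
    (fun z _ => ?_) (Set.mem_univ x) (Set.mem_univ y)
  have hH : 0 ≤ H := nonneg_of_mul_nonneg_left ((norm_nonneg (f'' z)).trans (hb z)) (hpos z)
  have hz := hpos z
  have hf'z := norm_fderiv_le_sqrt_mul hpos hf hf' hb z
  calc ‖(f z)⁻¹ • f'' z + (-(f z ^ 2)⁻¹ • f' z).smulRight (f' z)‖
      ≤ ‖(f z)⁻¹‖ * ‖f'' z‖ + ‖-(f z ^ 2)⁻¹‖ * ‖f' z‖ * ‖f' z‖ := by
        refine (opNorm_add_le _ _).trans (add_le_add (opNorm_smul_le _ _) ?_)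
        rw [norm_smulRight_apply]
        gcongr
        exact opNorm_smul_le _ _
    _ ≤ (f z)⁻¹ * (H * f z) + (f z ^ 2)⁻¹ * (√H * f z) * (√H * f z) := by
        rw [norm_neg, norm_inv, norm_inv, Real.norm_of_nonneg hz.le,
          Real.norm_of_nonneg (by positivity)]
        gcongr
        exact hb z
    _ = 2 * H := by field_simp; rw [sq_sqrt hH]; ring

end LogGradient

theorem norm_inv_smul_gradient_sub_le {E : Type*} [NormedAddCommGroup E]
    [InnerProductSpace ℝ E] {f : E → ℝ} {g : E → E} {A : E → E →L[ℝ] E} {H : ℝ}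
    (hpos : ∀ x, 0 < f x)
    (hg : ∀ x, HasFDerivAt f (innerSL ℝ (g x)) x) (hA : ∀ x, HasFDerivAt g (A x) x)
    (hb : ∀ x, ‖A x‖ ≤ H * f x) (x y : E) :
    ‖(f y)⁻¹ • g y - (f x)⁻¹ • g x‖ ≤ 2 * H * ‖y - x‖ := by
  let J : E →L[ℝ] E →L[ℝ] ℝ := innerSL ℝ
  have hJA : ∀ x, ‖J ∘L A x‖ ≤ H * f x := fun x => calc
    ‖J ∘L A x‖ ≤ ‖J‖ * ‖A x‖ := J.opNorm_comp_le _
    _ ≤ 1 * ‖A x‖ := by gcongr; exact norm_innerSL_le ℝ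
    _ ≤ H * f x := by rw [one_mul]; exact hb x
  have key := norm_inv_smul_fderiv_sub_le (f' := fun x => J (g x)) hpos hg
    (fun x => J.hasFDerivAt.comp x (hA x)) hJA x y
  rwa [← map_smul, ← map_smul, ← map_sub, innerSL_apply_norm] at key

section Coordinates

variable {n : Type*} [Fintype n]

theorem lpNorm_two_eq_norm_toLp (x : n → ℝ) : lpNorm 2 x = ‖WithLp.toLp 2 x‖ := rfl

theorem opNorm_two_two_eq_norm_toEuclideanCLM [DecidableEq n] (M : Matrix n n ℝ) :
    opNorm 2 2 M = ‖Matrix.toEuclideanCLM (𝕜 := ℝ) M‖ := by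
  rw [opNorm, ← ContinuousLinearMap.sSup_unitClosedBall_eq_norm]
  refine congrArg sSup (Set.ext fun c => ⟨?_, ?_⟩)
  · rintro ⟨x, hx, rfl⟩
    exact ⟨WithLp.toLp 2 x, by simpa [lpNorm_two_eq_norm_toLp] using hx, rfl⟩
  · rintro ⟨w, hw, rfl⟩
    exact ⟨WithLp.ofLp w, by simpa [lpNorm_two_eq_norm_toLp] using hw, rfl⟩

end Coordinates

theorem dotCLM_comp_ofLp {D : ℕ} (v : Fin D → ℝ) :
    dotCLM v ∘L (EuclideanSpace.equiv (Fin D) ℝ : EuclideanSpace ℝ (Fin D) →L[ℝ] Fin D → ℝ) =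
      innerSL ℝ (WithLp.toLp 2 v) := by
  refine ContinuousLinearMap.ext fun w => ?_
  simp [dotCLM, PiLp.inner_apply, mul_comm]

theorem toLp_comp_mulVecCLM_comp_ofLp {D : ℕ} (M : Matrix (Fin D) (Fin D) ℝ) :
    ((EuclideanSpace.equiv (Fin D) ℝ).symm : (Fin D → ℝ) →L[ℝ] EuclideanSpace ℝ (Fin D)) ∘L
      mulVecCLM M ∘L
        (EuclideanSpace.equiv (Fin D) ℝ : EuclideanSpace ℝ (Fin D) →L[ℝ] Fin D → ℝ) =
      Matrix.toEuclideanCLM (𝕜 := ℝ) M := by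
  ext w : 1
  rfl

theorem stmt6_general {D : ℕ}
    (f : (Fin D → ℝ) → ℝ) (g : (Fin D → ℝ) → (Fin D → ℝ))
    (Hess : (Fin D → ℝ) → Matrix (Fin D) (Fin D) ℝ)
    (hfpos : ∀ θ, 0 < f θ)
    (hgrad : ∀ θ, HasFDerivAt f (dotCLM (g θ)) θ)
    (hhess : ∀ θ, HasFDerivAt g (mulVecCLM (Hess θ)) θ)
    (H1 : ℝ)
    (hnus : ∀ θ, opNorm 2 2 (Hess θ) ≤ H1 * f θ) :
    ∀ x y, lpNorm 2 (fun i => g y i / f y - g x i / f x) ≤ 2 * H1 * lpNorm 2 (y - x) := by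
  intro x y
  let e := EuclideanSpace.equiv (Fin D) ℝ
  have key := norm_inv_smul_gradient_sub_le (f := f ∘ e) (g := e.symm ∘ g ∘ e)
    (A := fun w => Matrix.toEuclideanCLM (𝕜 := ℝ) (Hess (e w))) (fun w => hfpos (e w))
    (fun w => by
      rw [← dotCLM_comp_ofLp]
      exact (hgrad (e w)).comp w e.hasFDerivAt)
    (fun w => by
      rw [← toLp_comp_mulVecCLM_comp_ofLp]
      exact e.symm.hasFDerivAt.comp w ((hhess (e w)).comp w e.hasFDerivAt))
    (fun w => by rw [← opNorm_two_two_eq_norm_toEuclideanCLM]; exact hnus (e w))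
    (e.symm x) (e.symm y)
  have hquot : WithLp.toLp 2 (fun i => g y i / f y - g x i / f x) =
      (f y)⁻¹ • WithLp.toLp 2 (g y) - (f x)⁻¹ • WithLp.toLp 2 (g x) := by
    ext i
    simp [div_eq_inv_mul]
  rw [lpNorm_two_eq_norm_toLp, hquot, lpNorm_two_eq_norm_toLp, WithLp.toLp_sub]
  exact key

/-- Euclidean case: if ‖∇²f(θ)‖₂ ≤ H₁ f(θ) and f > 0, then θ ↦ ∇f(θ)/f(θ) is 2H₁-Lipschitz. -/
theorem stmt6 {D : ℕ}
    (f : (Fin D → ℝ) → ℝ) (g : (Fin D → ℝ) → (Fin D → ℝ))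
    (Hess : (Fin D → ℝ) → Matrix (Fin D) (Fin D) ℝ)
    (hfpos : ∀ θ, 0 < f θ)
    (hgrad : ∀ θ, HasFDerivAt f (dotCLM (g θ)) θ)
    (hhess : ∀ θ, HasFDerivAt g (mulVecCLM (Hess θ)) θ)
    (H1 : ℝ) (hH1 : 0 < H1)
    (hnus : ∀ θ, opNorm 2 2 (Hess θ) ≤ H1 * f θ) :
    ∀ x y, lpNorm 2 (fun i => g y i / f y - g x i / f x) ≤ 2 * H1 * lpNorm 2 (y - x) :=
  stmt6_general f g Hess hfpos hgrad hhess H1 hnus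
end

section
/- Consider the logistic loss f(θ) = (1/n)·Σᵢ ln(1 + exp(−yᵢ·⟨xᵢ, θ⟩)) on separable data with normalized margin γ_p > 0 (i.e. there exists θ* with yᵢ·⟨xᵢ, θ*⟩/‖θ*‖_p ≥ γ_p for all i). If f(θ) ≤ ln(2)/n, then ‖∇f(θ)‖_q ≥ (γ_p/2)·f(θ); and if f(θ) > ln(2)/n, then ‖∇f(θ)‖_q ≥ γ_p/(3n). -/
open scoped BigOperators

/-!
Write `uᵢ = exp (-yᵢ⟨xᵢ, θ⟩)` and `σᵢ = uᵢ / (1 + uᵢ)`. Differentiating `f` along `-θ*`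
gives `(1/n) Σ σᵢ yᵢ⟨xᵢ, θ*⟩ ≥ (γ/n) ‖θ*‖_p Σ σᵢ`, and by Hölder this directional derivative is
at most `‖∇f(θ)‖_q ‖θ*‖_p`; so `‖∇f(θ)‖_q ≥ (γ/n) Σ σᵢ`. It remains to bound `Σ σᵢ` from below.
If `n f(θ) = Σ ln (1 + uᵢ) ≤ ln 2`, every `uᵢ ≤ 1`, whence `ln (1 + uᵢ) ≤ uᵢ ≤ 2σᵢ`. Otherwise
either all `uᵢ ≤ 1` and `Σ σᵢ ≥ (ln 2)/2 > 1/3`, or some `uᵢ > 1` and already `σᵢ > 1/2`.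
-/

open Real Finset

lemma abs_apply_le_lpNorm {ι : Type*} [Fintype ι] (p : ENNReal) [Fact (1 ≤ p)] (a : ι → ℝ)
    (i : ι) : |a i| ≤ lpNorm p a :=
  PiLp.norm_apply_le ((WithLp.equiv p (ι → ℝ)).symm a) i

lemma lpNorm_one_eq_sum_abs {ι : Type*} [Fintype ι] (a : ι → ℝ) : lpNorm 1 a = ∑ i, |a i| := by
  rw [lpNorm, PiLp.norm_eq_sum (by simp)]
  simp

lemma lpNorm_neg {ι : Type*} [Fintype ι] (p : ENNReal) [Fact (1 ≤ p)] (a : ι → ℝ) :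
    lpNorm p (-a) = lpNorm p a := by
  simp [lpNorm]

lemma sum_mul_le_lpNorm_top_mul_lpNorm_one {ι : Type*} [Fintype ι] (a b : ι → ℝ) :
    ∑ i, a i * b i ≤ lpNorm ⊤ a * lpNorm 1 b := by
  rw [lpNorm_one_eq_sum_abs, mul_sum]
  refine sum_le_sum fun i _ ↦ ?_
  calc a i * b i ≤ |a i| * |b i| := by rw [← abs_mul]; exact le_abs_self _
    _ ≤ lpNorm ⊤ a * |b i| := by gcongr; exact abs_apply_le_lpNorm ⊤ a i

theorem sum_mul_le_lpNorm_mul_lpNorm {ι : Type*} [Fintype ι] {p q : ENNReal}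
    [p.HolderConjugate q] (a b : ι → ℝ) :
    ∑ i, a i * b i ≤ lpNorm p a * lpNorm q b := by
  by_cases hp : p = ⊤
  · obtain rfl : q = 1 := (ENNReal.HolderConjugate.eq_top_iff_eq_one p q).mp hp
    subst hp
    exact sum_mul_le_lpNorm_top_mul_lpNorm_one a b
  by_cases hq : q = ⊤
  · obtain rfl : p = 1 := (ENNReal.HolderConjugate.eq_top_iff_eq_one q p).mp hq
    subst hq
    simpa only [mul_comm] using sum_mul_le_lpNorm_top_mul_lpNorm_one b a
  have hpq := ENNReal.HolderConjugate.toReal_of_ne_top hp hq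
  simpa [lpNorm, PiLp.norm_eq_sum, hpq.pos, hpq.symm.pos] using
    Real.inner_le_Lp_mul_Lq univ a b hpq

lemma hasDerivAt_log_one_add_exp (z : ℝ) :
    HasDerivAt (fun z ↦ log (1 + exp z)) (exp z / (1 + exp z)) z := by
  simpa [div_eq_inv_mul] using ((hasDerivAt_exp z).const_add 1).log (by positivity)

theorem hasLineDerivAt_logisticLoss {ι κ : Type*} [Fintype ι] [Fintype κ] (c : ℝ)
    (x : ι → κ → ℝ) (y : ι → ℝ) (θ v : κ → ℝ) :
    HasLineDerivAt ℝ (fun θ ↦ c * ∑ i, log (1 + exp (-(y i) * ∑ j, x i j * θ j)))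
      (c * ∑ i, (-(y i) * ∑ j, x i j * v j) *
        (exp (-(y i) * ∑ j, x i j * θ j) / (1 + exp (-(y i) * ∑ j, x i j * θ j)))) θ v := by
  refine HasDerivAt.const_mul c (HasDerivAt.fun_sum fun i _ ↦ ?_)
  have hmargin : HasDerivAt (fun t : ℝ ↦ -(y i) * ∑ j, x i j * (θ + t • v) j)
      (-(y i) * ∑ j, x i j * v j) 0 := by
    have : HasDerivAt (fun t : ℝ ↦ ∑ j, x i j * (θ j + t * v j)) (∑ j, x i j * v j) 0 := by
      simpa using HasDerivAt.fun_sum fun j _ ↦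
        (((hasDerivAt_id (0 : ℝ)).mul_const (v j)).const_add (θ j)).const_mul (x i j)
    simpa using this.const_mul (-(y i))
  simpa [mul_comm, Function.comp_def] using (hasDerivAt_log_one_add_exp _).comp 0 hmargin

lemma log_one_add_le_two_mul_div_one_add {u : ℝ} (hu₀ : 0 ≤ u) (hu₁ : u ≤ 1) :
    log (1 + u) ≤ 2 * (u / (1 + u)) := by
  have hlog : log (1 + u) ≤ u := by linarith [log_le_sub_one_of_pos (by linarith : 0 < 1 + u)]
  have : u ≤ 2 * (u / (1 + u)) := by
    rw [mul_div_assoc', le_div_iff₀ (by linarith)]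
    nlinarith
  linarith

section LogisticWeights

variable {ι : Type*} [Fintype ι] {u : ι → ℝ}

lemma sum_log_one_add_le_two_mul_sum_div_one_add (hu₀ : ∀ i, 0 ≤ u i) (hu₁ : ∀ i, u i ≤ 1) :
    ∑ i, log (1 + u i) ≤ 2 * ∑ i, u i / (1 + u i) := by
  rw [mul_sum]
  exact sum_le_sum fun i _ ↦ log_one_add_le_two_mul_div_one_add (hu₀ i) (hu₁ i)

lemma le_one_of_sum_log_one_add_le_log_two (hu₀ : ∀ i, 0 ≤ u i)
    (hS : ∑ i, log (1 + u i) ≤ log 2) (i : ι) : u i ≤ 1 := by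
  have hlog : log (1 + u i) ≤ log 2 :=
    (single_le_sum (f := fun j ↦ log (1 + u j)) (fun j _ ↦ log_nonneg (by linarith [hu₀ j]))
      (mem_univ i)).trans hS
  linarith [(log_le_log_iff (by linarith [hu₀ i]) two_pos).mp hlog]

lemma one_third_le_sum_div_one_add (hu₀ : ∀ i, 0 ≤ u i) (hS : log 2 < ∑ i, log (1 + u i)) :
    1 / 3 ≤ ∑ i, u i / (1 + u i) := by
  by_cases hu₁ : ∀ i, u i ≤ 1
  · linarith [sum_log_one_add_le_two_mul_sum_div_one_add hu₀ hu₁, log_two_gt_d9]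
  push Not at hu₁
  obtain ⟨i, hi⟩ := hu₁
  have hσ : 1 / 3 ≤ u i / (1 + u i) := by
    rw [div_le_div_iff₀ (by norm_num) (by linarith)]
    linarith
  exact hσ.trans <| single_le_sum (f := fun j ↦ u j / (1 + u j))
    (fun j _ ↦ div_nonneg (hu₀ j) (by linarith [hu₀ j])) (mem_univ i)

end LogisticWeights

theorem mul_sum_le_lpNorm_of_hasFDerivAt_logisticLoss {ι : Type*} [Fintype ι] [Nonempty ι]
    {d : ℕ} {p q : ENNReal} [p.HolderConjugate q] {c : ℝ} (hc : 0 ≤ c) (x : ι → Fin d → ℝ)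
    (y : ι → ℝ) {f : (Fin d → ℝ) → ℝ}
    (hf : ∀ θ, f θ = c * ∑ i, log (1 + exp (-(y i) * ∑ j, x i j * θ j)))
    {θ w : Fin d → ℝ} (hgrad : HasFDerivAt f (dotCLM w) θ) {γ : ℝ} (hγ : 0 < γ)
    {θstar : Fin d → ℝ} (hsep : ∀ i, γ ≤ y i * (∑ j, x i j * θstar j) / lpNorm p θstar) :
    γ * c * ∑ i, exp (-(y i) * ∑ j, x i j * θ j) / (1 + exp (-(y i) * ∑ j, x i j * θ j)) ≤
      lpNorm q w := by
  have : Fact (1 ≤ p) := ⟨ENNReal.HolderConjugate.one_le p q⟩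
  obtain rfl : f = _ := funext hf
  set σ : ι → ℝ := fun i ↦
    exp (-(y i) * ∑ j, x i j * θ j) / (1 + exp (-(y i) * ∑ j, x i j * θ j))
  have hσ : ∀ i, 0 ≤ σ i := fun i ↦ by positivity
  have hnorm : 0 < lpNorm p θstar := by
    have h0 : 0 ≤ lpNorm p θstar := norm_nonneg _
    refine h0.lt_of_ne fun h ↦ ?_
    have := hsep (Classical.arbitrary ι)
    rw [← h, div_zero] at this
    linarith
  have hdir : dotCLM w (-θstar) = c * ∑ i, (y i * ∑ j, x i j * θstar j) * σ i := by
    rw [(hgrad.hasLineDerivAt _).unique (hasLineDerivAt_logisticLoss c x y θ _)]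
    simp [σ]
  have hholder : dotCLM w (-θstar) ≤ lpNorm q w * lpNorm p θstar := by
    simpa [dotCLM, LinearMap.sum_apply, lpNorm_neg] using
      sum_mul_le_lpNorm_mul_lpNorm (p := q) (q := p) w (-θstar)
  have hmargin : γ * lpNorm p θstar * (c * ∑ i, σ i) ≤ dotCLM w (-θstar) := by
    rw [hdir, mul_left_comm, mul_sum]
    refine mul_le_mul_of_nonneg_left (sum_le_sum fun i _ ↦ ?_) hc
    exact mul_le_mul_of_nonneg_right ((le_div_iff₀ hnorm).mp (hsep i)) (hσ i)
  refine le_of_mul_le_mul_right ?_ hnorm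
  calc γ * c * (∑ i, σ i) * lpNorm p θstar = γ * lpNorm p θstar * (c * ∑ i, σ i) := by ring
    _ ≤ lpNorm q w * lpNorm p θstar := hmargin.trans hholder

theorem stmt11_general {n d : ℕ} (hn : 0 < n) (p q : ENNReal)
    (hpq : 1/p + 1/q = 1)
    (x : Fin n → Fin d → ℝ) (y : Fin n → ℝ)
    (f : (Fin d → ℝ) → ℝ)
    (hf : ∀ θ, f θ = (1 / (n : ℝ)) *
      ∑ i, Real.log (1 + Real.exp (-(y i) * ∑ j, x i j * θ j)))
    (g : (Fin d → ℝ) → (Fin d → ℝ))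
    (hgrad : ∀ θ, HasFDerivAt f (dotCLM (g θ)) θ)
    (γ : ℝ) (hγ : 0 < γ) (θstar : Fin d → ℝ)
    (hsep : ∀ i, γ ≤ y i * (∑ j, x i j * θstar j) / lpNorm p θstar) :
    ∀ θ, (f θ ≤ Real.log 2 / n → (γ / 2) * f θ ≤ lpNorm q (g θ)) ∧
      (Real.log 2 / n < f θ → γ / (3 * n) ≤ lpNorm q (g θ)) := by
  intro θ
  have : p.HolderConjugate q := ENNReal.holderConjugate_iff.mpr (by simpa using hpq)
  have : Nonempty (Fin n) := ⟨⟨0, hn⟩⟩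
  have hn' : (0 : ℝ) < n := Nat.cast_pos.mpr hn
  set u : Fin n → ℝ := fun i ↦ exp (-(y i) * ∑ j, x i j * θ j)
  have hu₀ : ∀ i, 0 ≤ u i := fun i ↦ (exp_pos _).le
  have hgradθ : γ * (1 / n) * ∑ i, u i / (1 + u i) ≤ lpNorm q (g θ) :=
    mul_sum_le_lpNorm_of_hasFDerivAt_logisticLoss (by positivity) x y hf (hgrad θ) hγ hsep
  have hfθ : f θ = (∑ i, log (1 + u i)) / n := by rw [hf, one_div_mul_eq_div]
  rw [hfθ, div_le_div_iff_of_pos_right hn', div_lt_div_iff_of_pos_right hn']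
  refine ⟨fun hS ↦ ?_, fun hS ↦ ?_⟩
  · have hlog := sum_log_one_add_le_two_mul_sum_div_one_add hu₀
      (le_one_of_sum_log_one_add_le_log_two hu₀ hS)
    calc γ / 2 * ((∑ i, log (1 + u i)) / n)
        _ = γ * (1 / n) * ((∑ i, log (1 + u i)) / 2) := by ring
        _ ≤ γ * (1 / n) * ∑ i, u i / (1 + u i) := by gcongr; linarith
        _ ≤ _ := hgradθ
  · calc γ / (3 * n) ≤ γ * (1 / n) * ∑ i, u i / (1 + u i) := by
          rw [show γ / (3 * n) = γ * (1 / n) * (1 / 3) by field_simp]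
          gcongr
          exact one_third_le_sum_div_one_add hu₀ hS
      _ ≤ _ := hgradθ

/-- Logistic loss on separable data: gradient lower bounds in the two regimes. -/
theorem stmt11 {n d : ℕ} (hn : 0 < n) (p q : ENNReal) (hp : 1 ≤ p) (hq : 1 ≤ q)
    (hpq : 1/p + 1/q = 1)
    (x : Fin n → Fin d → ℝ) (y : Fin n → ℝ) (hy : ∀ i, y i = 1 ∨ y i = -1)
    (f : (Fin d → ℝ) → ℝ)
    (hf : ∀ θ, f θ = (1 / (n : ℝ)) *
      ∑ i, Real.log (1 + Real.exp (-(y i) * ∑ j, x i j * θ j)))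
    (g : (Fin d → ℝ) → (Fin d → ℝ))
    (hgrad : ∀ θ, HasFDerivAt f (dotCLM (g θ)) θ)
    (γ : ℝ) (hγ : 0 < γ) (θstar : Fin d → ℝ)
    (hsep : ∀ i, γ ≤ y i * (∑ j, x i j * θstar j) / lpNorm p θstar) :
    ∀ θ, (f θ ≤ Real.log 2 / n → (γ / 2) * f θ ≤ lpNorm q (g θ)) ∧
      (Real.log 2 / n < f θ → γ / (3 * n) ≤ lpNorm q (g θ)) :=
  stmt11_general hn p q hpq x y f hf g hgrad γ hγ θstar hsep
end

section
/- Let (f_t)_{t≥1} be nonnegative reals, A, B > 0, r ∈ (0, 1), δ > 0, and η ≤ A·δʳ/(2B), such that f_{t+1} ≤ f_t − η·A·f_tʳ + η²·B for all t. Let T_δ be the first index with f_{T_δ} ≤ δ. Then for all t < T_δ, f_{t+1} ≤ f_t and f_{t+1}^{1−r} ≤ f_t^{1−r} − (1−r)·A·η/2; consequently T_δ ≤ 2·f₁^{1−r}/(A·η·(1−r)) + 1. -/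
/-!
While `f t ≥ δ`, the choice of `η` makes the error `η²B` at most half of the drift
`ηA f_tʳ`, so `f (t+1) ≤ f t - (Aη/2) f_tʳ`. Concavity of `x ↦ x^{1-r}` (Bernoulli's
inequality) turns this into a drop of `(1-r)Aη/2` of `f^{1-r}` per step, and since
`f^{1-r} ≥ 0` there can be at most `2 f₁^{1-r} / (Aη(1-r))` such steps.
-/

open Real

theorem rpow_sub_le_rpow_sub_mul {x d s : ℝ} (hx : 0 < x) (hdx : d ≤ x) (hs0 : 0 ≤ s)
    (hs1 : s ≤ 1) : (x - d) ^ s ≤ x ^ s - s * d * x ^ (s - 1) := by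
  have hdx' : -1 ≤ -(d / x) := by rw [neg_le_neg_iff, div_le_one hx]; exact hdx
  calc (x - d) ^ s = x ^ s * (1 + -(d / x)) ^ s := by
        rw [← mul_rpow hx.le (by linarith)]
        congr 1
        field_simp
        ring
    _ ≤ x ^ s * (1 + s * -(d / x)) := by
        gcongr
        exact rpow_one_add_le_one_add_mul_self hdx' hs0 hs1
    _ = x ^ s - s * d * x ^ (s - 1) := by
        rw [rpow_sub_one hx.ne']
        field_simp
        ring

theorem rpow_one_sub_le_of_le_sub_mul_rpow {c r x y : ℝ} (hr0 : 0 ≤ r) (hr1 : r ≤ 1)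
    (hx : 0 < x) (hy : 0 ≤ y) (h : y ≤ x - c * x ^ r) :
    y ^ (1 - r) ≤ x ^ (1 - r) - (1 - r) * c := by
  have hxr : x ^ r * x ^ (1 - r - 1) = 1 := by
    rw [← rpow_add hx, show r + (1 - r - 1) = 0 by ring, rpow_zero]
  calc y ^ (1 - r) ≤ (x - c * x ^ r) ^ (1 - r) := by gcongr
    _ ≤ x ^ (1 - r) - (1 - r) * (c * x ^ r) * x ^ (1 - r - 1) :=
        rpow_sub_le_rpow_sub_mul hx (by linarith) (by linarith) (by linarith)
    _ = x ^ (1 - r) - (1 - r) * c := by rw [mul_assoc _ (c * x ^ r), mul_assoc c, hxr, mul_one]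

theorem sq_mul_le_half_mul_rpow {A B r δ η x : ℝ} (hA : 0 ≤ A) (hB : 0 < B) (hr0 : 0 ≤ r)
    (hδ : 0 ≤ δ) (hη : 0 ≤ η) (hηle : η ≤ A * δ ^ r / (2 * B)) (hx : δ ≤ x) :
    η ^ 2 * B ≤ A * η / 2 * x ^ r := by
  have hηB : η * (2 * B) ≤ A * δ ^ r := (le_div_iff₀ (by positivity)).mp hηle
  have hδx : A * δ ^ r ≤ A * x ^ r := by gcongr
  nlinarith

theorem descent_step {A B r δ η x y : ℝ} (hA : 0 < A) (hB : 0 < B) (hr0 : 0 < r)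
    (hr1 : r < 1) (hδ : 0 < δ) (hη : 0 < η) (hηle : η ≤ A * δ ^ r / (2 * B))
    (hx : δ ≤ x) (hy : 0 ≤ y) (hrec : y ≤ x - η * A * x ^ r + η ^ 2 * B) :
    y ≤ x ∧ y ^ (1 - r) ≤ x ^ (1 - r) - (1 - r) * A * η / 2 := by
  have hx0 : 0 < x := hδ.trans_le hx
  have hhalf : y ≤ x - A * η / 2 * x ^ r := by
    linarith [sq_mul_le_half_mul_rpow hA.le hB hr0.le hδ.le hη.le hηle hx]
  have hdrift : 0 < A * η / 2 * x ^ r := by positivity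
  refine ⟨by linarith, ?_⟩
  have := rpow_one_sub_le_of_le_sub_mul_rpow hr0.le hr1.le hx0 hy hhalf
  linarith

theorem sub_nat_mul_le_of_forall_le_sub {g : ℕ → ℝ} {c : ℝ} {m n : ℕ}
    (h : ∀ t, m ≤ t → t < m + n → g (t + 1) ≤ g t - c) : g (m + n) ≤ g m - n * c := by
  induction n with
  | zero => simp
  | succ n ih =>
    have hstep := h (m + n) le_self_add (by omega)
    have := ih fun t ht htn => h t ht (by omega)
    push_cast
    rw [← add_assoc]
    linarith

theorem nat_mul_le_of_forall_le_sub {g : ℕ → ℝ} {c : ℝ} {m n : ℕ} (hg : 0 ≤ g (m + n))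
    (h : ∀ t, m ≤ t → t < m + n → g (t + 1) ≤ g t - c) : n * c ≤ g m := by
  linarith [sub_nat_mul_le_of_forall_le_sub h]

/-- Phase-2 recursion lemma for exponent `r ∈ (0,1)`: descent, telescoping of
`f^{1-r}`, and a bound on the hitting time `T_δ` of level `δ`. -/
theorem stmt16 (f : ℕ → ℝ) (A B r δ η : ℝ) (hA : 0 < A) (hB : 0 < B)
    (hr0 : 0 < r) (hr1 : r < 1) (hδ : 0 < δ) (hη : 0 < η)
    (hηle : η ≤ A * δ ^ r / (2 * B)) (hfnn : ∀ t, 0 ≤ f t)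
    (hrec : ∀ t, 1 ≤ t → f (t + 1) ≤ f t - η * A * f t ^ r + η ^ 2 * B)
    (Tδ : ℕ) (hT : Tδ = sInf {t : ℕ | 1 ≤ t ∧ f t ≤ δ}) :
    {t : ℕ | 1 ≤ t ∧ f t ≤ δ}.Nonempty ∧
    (∀ t, 1 ≤ t → t < Tδ →
      f (t + 1) ≤ f t ∧ f (t + 1) ^ (1 - r) ≤ f t ^ (1 - r) - (1 - r) * A * η / 2) ∧
    (Tδ : ℝ) ≤ 2 * f 1 ^ (1 - r) / (A * η * (1 - r)) + 1 := by
  set S := {t : ℕ | 1 ≤ t ∧ f t ≤ δ}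
  have hr : 0 < 1 - r := by linarith
  set c := (1 - r) * A * η / 2 with hc_def
  have hc : 0 < c := by positivity
  have step : ∀ t, 1 ≤ t → t ∉ S →
      f (t + 1) ≤ f t ∧ f (t + 1) ^ (1 - r) ≤ f t ^ (1 - r) - c := fun t ht htS =>
    descent_step hA hB hr0 hr1 hδ hη hηle (le_of_not_ge fun h => htS ⟨ht, h⟩) (hfnn _)
      (hrec t ht)
  have drops : ∀ n : ℕ, (∀ t, 1 ≤ t → t < 1 + n → t ∉ S) → n * c ≤ f 1 ^ (1 - r) :=
    fun n hn => nat_mul_le_of_forall_le_sub (g := fun t => f t ^ (1 - r))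
      (rpow_nonneg (hfnn _) _) fun t ht htn => (step t ht (hn t ht htn)).2
  have hS : S.Nonempty := by
    by_contra hS
    obtain ⟨n, hn⟩ := exists_nat_gt (f 1 ^ (1 - r) / c)
    have := drops n fun t _ _ htS => hS ⟨t, htS⟩
    rw [div_lt_iff₀ hc] at hn
    linarith
  have before : ∀ t, t < Tδ → t ∉ S := fun t ht => Nat.notMem_of_lt_sInf (hT ▸ ht)
  obtain ⟨hT1, -⟩ : Tδ ∈ S := hT ▸ Nat.sInf_mem hS
  refine ⟨hS, fun t ht htT => step t ht (before t htT), ?_⟩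
  have hcount := drops (Tδ - 1) fun t _ ht => before t (by omega)
  rw [Nat.cast_sub hT1, Nat.cast_one] at hcount
  have hbound : 2 * f 1 ^ (1 - r) / (A * η * (1 - r)) = f 1 ^ (1 - r) / c := by
    rw [hc_def]
    field_simp
  rwa [hbound, ← sub_le_iff_le_add, le_div_iff₀ hc]
end

section
/- Consider minimizing f(θ) = θ²/2 over ℝ with normalized steepest descent θ_{t+1} = θ_t − η·sign(θ_t) using a constant step-size η > 0. For any ε ∈ (0, 1/8), there exists an initialization θ₁ such that the hitting time T_ε := inf{t ≥ 1 : f(θ_t) ≤ ε} satisfies T_ε = Ω(1/√ε). Specifically: if η > √(8ε), initializing θ₁ = η/2 makes the iterates oscillate between ±η/2 with f(θ_t) = η²/8 > ε for all t; and if η ≤ √(8ε), initializing θ₁ = 1 yields T_ε ≥ 1 + (1 − √(2ε))/√(8ε). -/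
/-!
Each step of sign descent moves `θ` by exactly `η`, so `|θ_t|` can shrink by at most `η` per
step: from `θ₁ = 1` the iterate needs at least `(1 - √(2ε)) / η ≥ (1 - √(2ε)) / √(8ε)` steps to
enter the sublevel set `{θ²/2 ≤ ε} = [-√(2ε), √(2ε)]`. On the other hand a point with
`|θ| = η/2` is sent to `-θ`, so starting from `η/2` the iterates flip between `±η/2` forever.
-/

theorem Real.abs_sign_le_one (x : ℝ) : |Real.sign x| ≤ 1 := by
  rcases Real.sign_apply_eq x with h | h | h <;> simp [h]

theorem abs_sub_le_abs_sub_mul_sign {η : ℝ} (hη : 0 ≤ η) (x : ℝ) :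
    |x| - η ≤ |x - η * Real.sign x| := by
  have hstep : |η * Real.sign x| ≤ η := by
    rw [abs_mul, abs_of_nonneg hη]
    exact mul_le_of_le_one_right hη (Real.abs_sign_le_one x)
  linarith [abs_sub_abs_le_abs_sub x (η * Real.sign x)]

theorem sub_mul_sign_eq_neg_of_abs_eq_half {η x : ℝ} (hx : |x| = η / 2) :
    x - η * Real.sign x = -x := by
  rcases lt_trichotomy x 0 with hneg | rfl | hpos
  · rw [Real.sign_of_neg hneg]
    rw [abs_of_neg hneg] at hx
    linarith
  · simp
  · rw [Real.sign_of_pos hpos]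
    rw [abs_of_pos hpos] at hx
    linarith

def IsSignDescent (η : ℝ) (θ : ℕ → ℝ) : Prop :=
  ∀ t, 1 ≤ t → θ (t + 1) = θ t - η * Real.sign (θ t)

namespace IsSignDescent

variable {η : ℝ} {θ : ℕ → ℝ}

theorem abs_eq_half (hθ : IsSignDescent η θ) (h₁ : |θ 1| = η / 2) :
    ∀ t, 1 ≤ t → |θ t| = η / 2 := by
  intro t ht
  induction t, ht using Nat.le_induction with
  | base => exact h₁
  | succ n hn ih => rw [hθ n hn, sub_mul_sign_eq_neg_of_abs_eq_half ih, abs_neg, ih]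

theorem sub_le_abs (hθ : IsSignDescent η θ) (hη : 0 ≤ η) :
    ∀ t : ℕ, 1 ≤ t → |θ 1| - ((t : ℝ) - 1) * η ≤ |θ t| := by
  intro t ht
  induction t, ht using Nat.le_induction with
  | base => simp
  | succ n hn ih =>
    rw [hθ n hn]
    push_cast
    linarith [abs_sub_le_abs_sub_mul_sign hη (θ n)]

end IsSignDescent

theorem stmt17_general (ε η : ℝ) (hη : 0 < η)
    (θ : ℕ → ℝ) (hupd : ∀ t, 1 ≤ t → θ (t + 1) = θ t - η * Real.sign (θ t)) :
    (Real.sqrt (8 * ε) < η → θ 1 = η / 2 →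
      ∀ t, 1 ≤ t → (θ t) ^ 2 / 2 = η ^ 2 / 8 ∧ ε < (θ t) ^ 2 / 2) ∧
    (η ≤ Real.sqrt (8 * ε) → θ 1 = 1 →
      ∀ T, 1 ≤ T → (θ T) ^ 2 / 2 ≤ ε →
        1 + (1 - Real.sqrt (2 * ε)) / Real.sqrt (8 * ε) ≤ (T : ℝ)) := by
  have hθ : IsSignDescent η θ := hupd
  constructor
  · intro hlarge h₁ t ht
    have habs := hθ.abs_eq_half (by rw [h₁, abs_of_pos (half_pos hη)]) t ht
    have hval : θ t ^ 2 / 2 = η ^ 2 / 8 := by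
      rw [← sq_abs, habs]
      ring
    have hε : 8 * ε < η ^ 2 := (Real.sqrt_lt' hη).mp hlarge
    exact ⟨hval, by linarith⟩
  · intro hsmall h₁ T hT hhit
    have hfar := hθ.sub_le_abs hη.le T hT
    have hnear : |θ T| ≤ Real.sqrt (2 * ε) := Real.abs_le_sqrt (by linarith)
    have hT₁ : (0 : ℝ) ≤ T - 1 := by
      have : (1 : ℝ) ≤ T := by exact_mod_cast hT
      linarith
    have hsteps : 1 - Real.sqrt (2 * ε) ≤ ((T : ℝ) - 1) * Real.sqrt (8 * ε) := by
      rw [h₁, abs_one] at hfar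
      linarith [mul_le_mul_of_nonneg_left hsmall hT₁]
    linarith [div_le_of_le_mul₀ (Real.sqrt_nonneg _) hT₁ hsteps]

/-- Lower bound on the hitting time of normalized steepest descent (sign GD) on the
one-dimensional quadratic `f(θ) = θ²/2`. -/
theorem stmt17 (ε η : ℝ) (hε : 0 < ε) (hε8 : ε < 1 / 8) (hη : 0 < η)
    (θ : ℕ → ℝ) (hupd : ∀ t, 1 ≤ t → θ (t + 1) = θ t - η * Real.sign (θ t)) :
    (Real.sqrt (8 * ε) < η → θ 1 = η / 2 →
      ∀ t, 1 ≤ t → (θ t) ^ 2 / 2 = η ^ 2 / 8 ∧ ε < (θ t) ^ 2 / 2) ∧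
    (η ≤ Real.sqrt (8 * ε) → θ 1 = 1 →
      ∀ T, 1 ≤ T → (θ T) ^ 2 / 2 ≤ ε →
        1 + (1 - Real.sqrt (2 * ε)) / Real.sqrt (8 * ε) ≤ (T : ℝ)) :=
  stmt17_general ε η hη θ hupd
end

section
/- Let g_{s,i} be real numbers for s = 1,…,t and i = 1,…,D, β ∈ (0,1), and define v_{t,i} = (1−β)·Σ_{s=1}^t β^{t−s}·g_{s,i}², assuming v_{t,i} > 0 for all i. Let ‖g_s‖₁ = Σᵢ |g_{s,i}|. Then Σᵢ g_{t,i}²/√(v_{t,i}) ≥ ‖g_t‖₁² / (√(1−β)·Σ_{j=0}^{t−1} (√β)ʲ·‖g_{t−j}‖₁). -/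
/-!
By Cauchy–Schwarz, `‖g_t‖₁² ≤ (∑ᵢ g_{t,i}² / √v_{t,i}) · ∑ᵢ √v_{t,i}`, so it suffices to bound
`∑ᵢ √v_{t,i}` by the denominator. Each `v_{t,i}` is `1 - β` times a sum of the squares
`(√β^(t-s) |g_{s,i}|)²`, and the square root of a sum of squares of nonnegative numbers is at most
their sum.
-/

open Finset Real

lemma Real.sqrt_sum_sq_le_sum {ι : Type*} (s : Finset ι) {f : ι → ℝ} (hf : ∀ i ∈ s, 0 ≤ f i) :
    √(∑ i ∈ s, f i ^ 2) ≤ ∑ i ∈ s, f i :=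
  (sqrt_le_left (sum_nonneg hf)).2 (sum_sq_le_sq_sum_of_nonneg hf)

lemma Finset.sum_Icc_one_eq_sum_range_sub {M : Type*} [AddCommMonoid M] (t : ℕ)
    (f : ℕ → ℕ → M) : ∑ s ∈ Icc 1 t, f (t - s) s = ∑ j ∈ range t, f j (t - j) := by
  refine sum_nbij' (t - ·) (t - ·) ?_ ?_ ?_ ?_ fun s hs => ?_
  iterate 4 (intro s hs; simp only [mem_Icc, mem_range] at hs ⊢; omega)
  rw [Nat.sub_sub_self (mem_Icc.1 hs).2]

lemma Finset.sq_sum_abs_le_sum_sq_div_mul_sum {ι : Type*} (s : Finset ι) (x : ι → ℝ)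
    {w : ι → ℝ} (hw : ∀ i ∈ s, 0 < w i) :
    (∑ i ∈ s, |x i|) ^ 2 ≤ (∑ i ∈ s, x i ^ 2 / w i) * ∑ i ∈ s, w i :=
  sum_sq_le_sum_mul_sum_of_sq_le_mul s (fun i hi => div_nonneg (sq_nonneg _) (hw i hi).le)
    (fun i hi => (hw i hi).le) fun i hi => by rw [sq_abs, div_mul_cancel₀ _ (hw i hi).ne']

lemma sqrt_ema_sq_le {β : ℝ} (hβ : 0 ≤ β) (t : ℕ) (x : ℕ → ℝ) :
    √((1 - β) * ∑ s ∈ Icc 1 t, β ^ (t - s) * x s ^ 2) ≤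
      √(1 - β) * ∑ j ∈ range t, √β ^ j * |x (t - j)| := by
  have hsq (j : ℕ) : β ^ j * x (t - j) ^ 2 = (√β ^ j * |x (t - j)|) ^ 2 := by
    rw [mul_pow, pow_right_comm, sq_sqrt hβ, sq_abs]
  rw [sqrt_mul' _ (sum_nonneg fun s _ => by positivity),
    sum_Icc_one_eq_sum_range_sub t (fun j s => β ^ j * x s ^ 2)]
  simp only [hsq]
  gcongr
  exact sqrt_sum_sq_le_sum _ fun j _ => by positivity

lemma sum_sqrt_ema_sq_le {ι : Type*} [Fintype ι] {β : ℝ} (hβ : 0 ≤ β) (t : ℕ)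
    (g : ℕ → ι → ℝ) :
    ∑ i, √((1 - β) * ∑ s ∈ Icc 1 t, β ^ (t - s) * g s i ^ 2) ≤
      √(1 - β) * ∑ j ∈ range t, √β ^ j * ∑ i, |g (t - j) i| :=
  calc _ ≤ ∑ i, √(1 - β) * ∑ j ∈ range t, √β ^ j * |g (t - j) i| :=
        sum_le_sum fun i _ => sqrt_ema_sq_le hβ t (g · i)
    _ = _ := by rw [← mul_sum, sum_comm]; simp only [mul_sum]

theorem stmt19_general {D : ℕ} (t : ℕ) (β : ℝ) (hβ0 : 0 < β)
    (g : ℕ → Fin D → ℝ) (v : Fin D → ℝ)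
    (hv : ∀ i, v i = (1 - β) * ∑ s ∈ Finset.Icc 1 t, β ^ (t - s) * (g s i) ^ 2)
    (hvpos : ∀ i, 0 < v i) :
    (∑ i, |g t i|) ^ 2 /
        (Real.sqrt (1 - β) * ∑ j ∈ Finset.range t, Real.sqrt β ^ j * ∑ i, |g (t - j) i|) ≤
      ∑ i, (g t i) ^ 2 / Real.sqrt (v i) := by
  have hsum_sqrt_v : ∑ i, √(v i) ≤ √(1 - β) * ∑ j ∈ range t, √β ^ j * ∑ i, |g (t - j) i| := by
    simpa only [hv] using sum_sqrt_ema_sq_le hβ0.le t g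
  have hR : 0 ≤ ∑ i, g t i ^ 2 / √(v i) := sum_nonneg fun i _ => by positivity
  refine div_le_of_le_mul₀ ((sum_nonneg fun i _ => sqrt_nonneg _).trans hsum_sqrt_v) hR ?_
  calc (∑ i, |g t i|) ^ 2 ≤ (∑ i, g t i ^ 2 / √(v i)) * ∑ i, √(v i) :=
        sq_sum_abs_le_sum_sq_div_mul_sum _ _ fun i _ => sqrt_pos.2 (hvpos i)
    _ ≤ _ := mul_le_mul_of_nonneg_left hsum_sqrt_v hR

/-- RMSProp preconditioner lemma:
`Σᵢ g_{t,i}²/√v_{t,i} ≥ ‖g_t‖₁² / (√(1-β) Σ_{j<t} (√β)ʲ ‖g_{t-j}‖₁)`. -/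
theorem stmt19 {D : ℕ} (t : ℕ) (ht : 1 ≤ t) (β : ℝ) (hβ0 : 0 < β) (hβ1 : β < 1)
    (g : ℕ → Fin D → ℝ) (v : Fin D → ℝ)
    (hv : ∀ i, v i = (1 - β) * ∑ s ∈ Finset.Icc 1 t, β ^ (t - s) * (g s i) ^ 2)
    (hvpos : ∀ i, 0 < v i) :
    (∑ i, |g t i|) ^ 2 /
        (Real.sqrt (1 - β) * ∑ j ∈ Finset.range t, Real.sqrt β ^ j * ∑ i, |g (t - j) i|) ≤
      ∑ i, (g t i) ^ 2 / Real.sqrt (v i) :=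
  stmt19_general t β hβ0 g v hv hvpos
end
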